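/- For any n×p matrix Φ and positive integer k with 4k ≤ p, δ_{4k}(Φ) ≤ 3·δ_{2k}(Φ). -/

import Mathlib

noncomputable def l2norm {p : ℕ} (c : Fin p → ℝ) : ℝ := Real.sqrt (∑ i, (c i)^2)

def IsSparse {p : ℕ} (k : ℕ) (c : Fin p → ℝ) : Prop :=
  (Finset.univ.filter (fun i => c i ≠ 0)).card ≤ k

/-- The restricted isometry constant `δ_k(Φ)`. -/
noncomputable def ripConst {n p : ℕ} (Φ : Matrix (Fin n) (Fin p) ℝ) (k : ℕ) : ℝ :=
  sInf {δ : ℝ | 0 ≤ δ ∧ ∀ c : Fin p → ℝ, IsSparse k c →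
    (1 - δ) * ∑ i, (c i)^2 ≤ (∑ i, (Φ.mulVec c i)^2) ∧
    (∑ i, (Φ.mulVec c i)^2) ≤ (1 + δ) * ∑ i, (c i)^2}

/-- The restricted orthogonality constant `θ_{k,k'}(Φ)`. -/
noncomputable def roConst {n p : ℕ} (Φ : Matrix (Fin n) (Fin p) ℝ) (k k' : ℕ) : ℝ :=
  sInf {θ : ℝ | 0 ≤ θ ∧ ∀ c c' : Fin p → ℝ, IsSparse k c → IsSparse k' c' →
    (∀ i, c i = 0 ∨ c' i = 0) →
    |∑ i, (Φ.mulVec c i) * (Φ.mulVec c' i)| ≤ θ * l2norm c * l2norm c'}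

/-!
Split a `4k`-sparse `c` into disjointly supported `2k`-sparse parts `x + y`, so that
`‖Φc‖² = ‖Φx‖² + ‖Φy‖² + 2⟪Φx, Φy⟫` and `‖c‖² = ‖x‖² + ‖y‖²`. The first two terms are controlled by
`δ_{2k}`. Splitting `x` and `y` once more into `k`-sparse pieces, polarization (the RIP bounds for
`xᵢ ± yⱼ`) gives `|⟪Φxᵢ, Φyⱼ⟫| ≤ δ_{2k} (‖xᵢ‖² + ‖yⱼ‖²) / 2`; summing the four cross terms,
`|⟪Φx, Φy⟫| ≤ δ_{2k} ‖c‖²`, hence `δ_{4k} ≤ δ_{2k} + 2 δ_{2k}`.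
-/

open Finset Function Matrix

section SumSq

variable {ι : Type*} [Fintype ι]

lemma sum_sq_add (u v : ι → ℝ) :
    ∑ i, (u + v) i ^ 2 = ∑ i, u i ^ 2 + ∑ i, v i ^ 2 + 2 * (u ⬝ᵥ v) := by
  simp only [Pi.add_apply, add_sq, sum_add_distrib, dotProduct, mul_sum, mul_assoc]
  ring

lemma sum_sq_sub (u v : ι → ℝ) :
    ∑ i, (u - v) i ^ 2 = ∑ i, u i ^ 2 + ∑ i, v i ^ 2 - 2 * (u ⬝ᵥ v) := by
  simp only [Pi.sub_apply, sub_sq, sum_add_distrib, sum_sub_distrib, dotProduct, mul_sum,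
    mul_assoc]
  ring

lemma dotProduct_eq_zero_of_disjoint_support {u v : ι → ℝ}
    (h : Disjoint (support u) (support v)) : u ⬝ᵥ v = 0 :=
  sum_eq_zero fun i _ => by
    by_cases hu : u i = 0
    · rw [hu, zero_mul]
    · rw [notMem_support.mp (Set.disjoint_left.mp h hu), mul_zero]

lemma sum_sq_add_of_disjoint_support {u v : ι → ℝ} (h : Disjoint (support u) (support v)) :
    ∑ i, (u + v) i ^ 2 = ∑ i, u i ^ 2 + ∑ i, v i ^ 2 := by
  rw [sum_sq_add, dotProduct_eq_zero_of_disjoint_support h, mul_zero, add_zero]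

lemma sum_sq_sub_of_disjoint_support {u v : ι → ℝ} (h : Disjoint (support u) (support v)) :
    ∑ i, (u - v) i ^ 2 = ∑ i, u i ^ 2 + ∑ i, v i ^ 2 := by
  rw [sum_sq_sub, dotProduct_eq_zero_of_disjoint_support h, mul_zero, sub_zero]

lemma sum_sq_mulVec_le {κ : Type*} [Fintype κ] (A : Matrix κ ι ℝ) (c : ι → ℝ) :
    ∑ i, (A *ᵥ c) i ^ 2 ≤ (∑ i, ∑ j, A i j ^ 2) * ∑ j, c j ^ 2 := by
  rw [sum_mul]
  exact sum_le_sum fun i _ => sum_mul_sq_le_sq_mul_sq univ (A i) c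

end SumSq

section Sparse

variable {p : ℕ}

lemma IsSparse.of_support_subset {k : ℕ} {c : Fin p → ℝ} {s : Finset (Fin p)}
    (hc : support c ⊆ (s : Set (Fin p))) (hs : #s ≤ k) : IsSparse k c :=
  (card_le_card (s := univ.filter (c · ≠ 0)) fun _ hi => hc (mem_filter.mp hi).2).trans hs

lemma IsSparse.of_support_subset_union {a b : ℕ} {x y c : Fin p → ℝ}
    (hx : IsSparse a x) (hy : IsSparse b y) (hc : support c ⊆ support x ∪ support y) :
    IsSparse (a + b) c := by
  classical
  refine IsSparse.of_support_subset (s := univ.filter (x · ≠ 0) ∪ univ.filter (y · ≠ 0))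
    (fun i hi => ?_) ((card_union_le _ _).trans (add_le_add hx hy))
  simpa [or_comm] using hc hi

lemma IsSparse.exists_split {a b : ℕ} {c : Fin p → ℝ} (hc : IsSparse (a + b) c) :
    ∃ x y : Fin p → ℝ, x + y = c ∧ IsSparse a x ∧ IsSparse b y ∧
      Disjoint (support x) (support y) ∧ support x ⊆ support c ∧ support y ⊆ support c := by
  classical
  set S := univ.filter fun i => c i ≠ 0
  obtain ⟨T, hTS, hT⟩ := exists_subset_card_eq (min_le_right a #S)
  refine ⟨Set.indicator T c, Set.indicator (↑T)ᶜ c, Set.indicator_self_add_compl _ _,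
    .of_support_subset (s := T) ?_ (hT.trans_le (min_le_left _ _)),
    .of_support_subset (s := S \ T) ?_ ?_, ?_, ?_, ?_⟩
  · rw [Set.support_indicator]
    exact Set.inter_subset_left
  · rw [Set.support_indicator]
    rintro i ⟨hiT, hic⟩
    simp_all [S]
  · have : #S ≤ a + b := hc
    rw [card_sdiff_of_subset hTS, hT]
    omega
  all_goals simp only [Set.support_indicator]
  · exact (disjoint_compl_right (a := (T : Set (Fin p)))).mono
      Set.inter_subset_left Set.inter_subset_left
  · exact Set.inter_subset_right
  · exact Set.inter_subset_right

end Sparse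

section Rip

variable {n p : ℕ} (Φ : Matrix (Fin n) (Fin p) ℝ)

def HasRip (k : ℕ) (δ : ℝ) : Prop :=
  ∀ c : Fin p → ℝ, IsSparse k c →
    (1 - δ) * ∑ i, c i ^ 2 ≤ ∑ i, (Φ *ᵥ c) i ^ 2 ∧ ∑ i, (Φ *ᵥ c) i ^ 2 ≤ (1 + δ) * ∑ i, c i ^ 2

lemma isClosed_setOf_hasRip (k : ℕ) : IsClosed {δ | HasRip Φ k δ} := by
  simp only [HasRip, Set.ofPred_forall, Set.ofPred_and]
  exact isClosed_iInter fun c => isClosed_iInter fun _ =>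
    (isClosed_le (by fun_prop) (by fun_prop)).inter (isClosed_le (by fun_prop) (by fun_prop))

lemma hasRip_one_add_sum_sq (k : ℕ) : HasRip Φ k (1 + ∑ i, ∑ j, Φ i j ^ 2) := by
  intro c _
  have hc : 0 ≤ ∑ i, c i ^ 2 := sum_nonneg fun _ _ => sq_nonneg _
  have hΦ : 0 ≤ ∑ i, ∑ j, Φ i j ^ 2 := sum_nonneg fun _ _ => sum_nonneg fun _ _ => sq_nonneg _
  have hΦc : 0 ≤ ∑ i, (Φ *ᵥ c) i ^ 2 := sum_nonneg fun _ _ => sq_nonneg _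
  constructor <;> nlinarith [sum_sq_mulVec_le Φ c]

lemma ripConst_nonneg (k : ℕ) : 0 ≤ ripConst Φ k :=
  Real.sInf_nonneg fun _ hδ => hδ.1

lemma hasRip_ripConst (k : ℕ) : HasRip Φ k (ripConst Φ k) :=
  ((isClosed_Ici.inter (isClosed_setOf_hasRip Φ k)).csInf_mem
    ⟨_, Set.mem_Ici.mpr (by positivity), hasRip_one_add_sum_sq Φ k⟩ ⟨0, fun _ hδ => hδ.1⟩).2

lemma ripConst_le_of_hasRip {k : ℕ} {δ : ℝ} (hδ : 0 ≤ δ) (h : HasRip Φ k δ) :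
    ripConst Φ k ≤ δ :=
  csInf_le ⟨0, fun _ hδ => hδ.1⟩ ⟨hδ, h⟩

variable {Φ}

lemma HasRip.abs_dotProduct_le {s t : ℕ} {δ : ℝ} (h : HasRip Φ (s + t) δ) {x y : Fin p → ℝ}
    (hx : IsSparse s x) (hy : IsSparse t y) (hxy : Disjoint (support x) (support y)) :
    |Φ *ᵥ x ⬝ᵥ Φ *ᵥ y| ≤ δ * (∑ i, x i ^ 2 + ∑ i, y i ^ 2) / 2 := by
  have hadd := h (x + y) (hx.of_support_subset_union hy (support_add x y))
  have hsub := h (x - y) (hx.of_support_subset_union hy (support_sub x y))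
  rw [mulVec_add, sum_sq_add_of_disjoint_support hxy, sum_sq_add] at hadd
  rw [mulVec_sub, sum_sq_sub_of_disjoint_support hxy, sum_sq_sub] at hsub
  rw [abs_le]
  constructor <;> linarith [hadd.1, hadd.2, hsub.1, hsub.2]

lemma HasRip.abs_dotProduct_le_of_isSparse_add_self {s t : ℕ} {δ : ℝ} (h : HasRip Φ (s + t) δ)
    {x y : Fin p → ℝ} (hx : IsSparse (s + s) x) (hy : IsSparse (t + t) y)
    (hxy : Disjoint (support x) (support y)) :
    |Φ *ᵥ x ⬝ᵥ Φ *ᵥ y| ≤ δ * (∑ i, x i ^ 2 + ∑ i, y i ^ 2) := by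
  obtain ⟨x₁, x₂, rfl, hx₁, hx₂, hx₁₂, hx₁x, hx₂x⟩ := hx.exists_split
  obtain ⟨y₁, y₂, rfl, hy₁, hy₂, hy₁₂, hy₁y, hy₂y⟩ := hy.exists_split
  have h₁₁ := h.abs_dotProduct_le hx₁ hy₁ (hxy.mono hx₁x hy₁y)
  have h₁₂ := h.abs_dotProduct_le hx₁ hy₂ (hxy.mono hx₁x hy₂y)
  have h₂₁ := h.abs_dotProduct_le hx₂ hy₁ (hxy.mono hx₂x hy₁y)
  have h₂₂ := h.abs_dotProduct_le hx₂ hy₂ (hxy.mono hx₂x hy₂y)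
  rw [sum_sq_add_of_disjoint_support hx₁₂, sum_sq_add_of_disjoint_support hy₁₂]
  simp only [mulVec_add, add_dotProduct, dotProduct_add]
  rw [abs_le] at *
  constructor <;> linarith

lemma HasRip.four_mul {k : ℕ} {δ : ℝ} (h : HasRip Φ (2 * k) δ) : HasRip Φ (4 * k) (3 * δ) := by
  intro c hc
  rw [two_mul] at h
  rw [show 4 * k = k + k + (k + k) by ring] at hc
  obtain ⟨x, y, rfl, hx, hy, hxy, -, -⟩ := hc.exists_split
  have hxy' := abs_le.mp (h.abs_dotProduct_le_of_isSparse_add_self hx hy hxy)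
  have hx' := h x hx
  have hy' := h y hy
  rw [mulVec_add, sum_sq_add_of_disjoint_support hxy, sum_sq_add]
  constructor <;> linarith [hx'.1, hx'.2, hy'.1, hy'.2]

end Rip

theorem ripConst_four_le_general (n p k : ℕ) (Φ : Matrix (Fin n) (Fin p) ℝ) :
    ripConst Φ (4 * k) ≤ 3 * ripConst Φ (2 * k) :=
  ripConst_le_of_hasRip Φ (by linarith [ripConst_nonneg Φ (2 * k)])
    (hasRip_ripConst Φ (2 * k)).four_mul

theorem ripConst_four_le (n p k : ℕ) (Φ : Matrix (Fin n) (Fin p) ℝ)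
    (hk : 0 < k) (hp : 4 * k ≤ p) :
    ripConst Φ (4 * k) ≤ 3 * ripConst Φ (2 * k) :=
  ripConst_four_le_general n p k Φ
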